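/- Under the general setup, the operator T : K → K is compact, i.e. T is continuous on K and maps every bounded subset of K to a relatively compact subset of C([0,1])×C([0,1]). -/

import Mathlib

open MeasureTheory Set Filter

noncomputable section

/-- The sup norm `‖w‖∞ = sup {|w(t)| : t ∈ [0,1]}`. -/
def supN (w : ℝ → ℝ) : ℝ := sSup ((fun t => |w t|) '' Icc (0:ℝ) 1)

/-- The minimum `min {w(t) : t ∈ [a,b]}`. -/
def minOnIcc (w : ℝ → ℝ) (a b : ℝ) : ℝ := sInf (w '' Icc a b)

/-- The general setup of Infante–Pietramala, "Multiple positive solutions of systems with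
coupled nonlinear BCs".  Indices `i, j ∈ {1,2}` of the paper correspond to `0, 1 : Fin 2`. -/
structure Setup where
  f : Fin 2 → ℝ → ℝ → ℝ → ℝ
  k : Fin 2 → ℝ → ℝ → ℝ
  g : Fin 2 → ℝ → ℝ
  a : Fin 2 → ℝ
  b : Fin 2 → ℝ
  Φ : Fin 2 → ℝ → ℝ
  c : Fin 2 → ℝ
  B : Fin 2 → Fin 2 → Measure ℝ
  C : Fin 2 → Fin 2 → Measure ℝ
  H : Fin 2 → Fin 2 → ℝ → ℝ
  L : Fin 2 → Fin 2 → ℝ → ℝ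
  h1 : Fin 2 → Fin 2 → ℝ
  h2 : Fin 2 → Fin 2 → ℝ
  l2 : Fin 2 → Fin 2 → ℝ
  γ : Fin 2 → Fin 2 → ℝ → ℝ
  cγ : Fin 2 → Fin 2 → ℝ
  -- the nonlinearities fᵢ : [0,1] × [0,∞)² → [0,∞) satisfy Carathéodory conditions
  f_nonneg : ∀ i, ∀ t ∈ Icc (0:ℝ) 1, ∀ u, 0 ≤ u → ∀ v, 0 ≤ v → 0 ≤ f i t u v
  f_meas : ∀ i u v, Measurable fun t => f i t u v
  f_cont : ∀ i, ∀ᵐ t ∂(volume.restrict (Icc (0:ℝ) 1)),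
      ContinuousOn (fun p : ℝ × ℝ => f i t p.1 p.2) (Ici 0 ×ˢ Ici 0)
  f_bdd : ∀ i, ∀ r > (0:ℝ), ∃ φ : ℝ → ℝ, MemLp φ ⊤ (volume.restrict (Icc (0:ℝ) 1)) ∧
      ∀ᵐ t ∂(volume.restrict (Icc (0:ℝ) 1)), ∀ u ∈ Icc (0:ℝ) r, ∀ v ∈ Icc (0:ℝ) r,
        f i t u v ≤ φ t
  -- the kernels
  k_nonneg : ∀ i, ∀ t ∈ Icc (0:ℝ) 1, ∀ s ∈ Icc (0:ℝ) 1, 0 ≤ k i t s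
  k_meas : ∀ i, Measurable (Function.uncurry (k i))
  k_cont : ∀ i, ∀ τ ∈ Icc (0:ℝ) 1, ∀ᵐ s ∂(volume.restrict (Icc (0:ℝ) 1)),
      Tendsto (fun t => |k i t s - k i τ s|) (nhds τ) (nhds 0)
  -- the subintervals [aᵢ,bᵢ] ⊆ [0,1], the functions Φᵢ and the constants cᵢ ∈ (0,1]
  ab_mem : ∀ i, 0 ≤ a i ∧ a i ≤ b i ∧ b i ≤ 1
  Φ_mem : ∀ i, MemLp (Φ i) ⊤ (volume.restrict (Icc (0:ℝ) 1))
  c_mem : ∀ i, c i ∈ Ioc (0:ℝ) 1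
  k_le : ∀ i, ∀ t ∈ Icc (0:ℝ) 1, ∀ᵐ s ∂(volume.restrict (Icc (0:ℝ) 1)), k i t s ≤ Φ i s
  k_ge : ∀ i, ∀ t ∈ Icc (a i) (b i), ∀ᵐ s ∂(volume.restrict (Icc (0:ℝ) 1)),
      c i * Φ i s ≤ k i t s
  -- the weights gᵢ
  g_meas : ∀ i, Measurable (g i)
  g_nonneg : ∀ i, ∀ᵐ s ∂(volume.restrict (Icc (0:ℝ) 1)), 0 ≤ g i s
  gΦ_int : ∀ i, IntegrableOn (fun s => g i s * Φ i s) (Icc (0:ℝ) 1)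
  gΦ_pos : ∀ i, 0 < ∫ s in Icc (a i) (b i), Φ i s * g i s
  -- the Stieltjes measures defining the functionals β and δ
  B_fin : ∀ i j, IsFiniteMeasure (B i j)
  C_fin : ∀ i j, IsFiniteMeasure (C i j)
  B_supp : ∀ i j, B i j (Icc (0:ℝ) 1)ᶜ = 0
  C_supp : ∀ i j, C i j (Icc (0:ℝ) 1)ᶜ = 0
  -- the nonlinear boundary functions H, L with their linear bounds
  H_cont : ∀ i j, ContinuousOn (H i j) (Ici 0)
  L_cont : ∀ i j, ContinuousOn (L i j) (Ici 0)
  H_nonneg : ∀ i j w, 0 ≤ w → 0 ≤ H i j w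
  L_nonneg : ∀ i j w, 0 ≤ w → 0 ≤ L i j w
  h1_nonneg : ∀ i j, 0 ≤ h1 i j
  h2_nonneg : ∀ i j, 0 ≤ h2 i j
  l2_nonneg : ∀ i j, 0 ≤ l2 i j
  H_bound_lower : ∀ i j w, 0 ≤ w → h1 i j * w ≤ H i j w
  H_bound_upper : ∀ i j w, 0 ≤ w → H i j w ≤ h2 i j * w
  L_bound : ∀ i j w, 0 ≤ w → L i j w ≤ l2 i j * w
  -- the functions γᵢⱼ
  γ_cont : ∀ i j, ContinuousOn (γ i j) (Icc (0:ℝ) 1)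
  γ_nonneg : ∀ i j, ∀ t ∈ Icc (0:ℝ) 1, 0 ≤ γ i j t
  hβγ : ∀ i j, h2 i j * ∫ s, γ i j s ∂(B i j) < 1
  cγ_mem : ∀ i j, cγ i j ∈ Ioc (0:ℝ) 1
  γ_ge : ∀ i j, ∀ t ∈ Icc (a i) (b i), cγ i j * supN (γ i j) ≤ γ i j t
  -- positivity of the determinants Dᵢ
  D_pos : ∀ i,
      0 < (1 - h2 i 0 * ∫ s, γ i 0 s ∂(B i 0)) * (1 - h2 i 1 * ∫ s, γ i 1 s ∂(B i 1))
        - h2 i 0 * h2 i 1 * (∫ s, γ i 1 s ∂(B i 0)) * (∫ s, γ i 0 s ∂(B i 1))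

namespace Setup

variable (S : Setup)

/-- The functionals `β_{ij}[w] = ∫₀¹ w dB_{ij}`. -/
def β (i j : Fin 2) (w : ℝ → ℝ) : ℝ := ∫ s, w s ∂(S.B i j)

/-- The functionals `δ_{ij}[w] = ∫₀¹ w dC_{ij}`. -/
def δ (i j : Fin 2) (w : ℝ → ℝ) : ℝ := ∫ s, w s ∂(S.C i j)

/-- The Hammerstein integral operators `Fᵢ`. -/
def F (i : Fin 2) (u v : ℝ → ℝ) (t : ℝ) : ℝ :=
  ∫ s in Icc (0:ℝ) 1, S.k i t s * S.g i s * S.f i s (u s) (v s)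

/-- First component of the operator `T`. -/
def T1 (u v : ℝ → ℝ) (t : ℝ) : ℝ :=
  S.γ 0 0 t * (S.H 0 0 (S.β 0 0 u) + S.L 0 0 (S.δ 0 0 v))
    + S.γ 0 1 t * (S.H 0 1 (S.β 0 1 u) + S.L 0 1 (S.δ 0 1 v))
    + S.F 0 u v t

/-- Second component of the operator `T`. -/
def T2 (u v : ℝ → ℝ) (t : ℝ) : ℝ :=
  S.γ 1 0 t * (S.L 1 0 (S.δ 1 0 u) + S.H 1 0 (S.β 1 0 v))
    + S.γ 1 1 t * (S.L 1 1 (S.δ 1 1 u) + S.H 1 1 (S.β 1 1 v))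
    + S.F 1 u v t

/-- The constants `c̃ᵢ = min{cᵢ, c_{i1}, c_{i2}}`. -/
def ctilde (i : Fin 2) : ℝ := min (S.c i) (min (S.cγ i 0) (S.cγ i 1))

/-- The constant `c = min{c̃₁, c̃₂}`. -/
def cc : ℝ := min (S.ctilde 0) (S.ctilde 1)

/-- Membership of `(u,v)` in the cone `K = K̃₁ × K̃₂`. -/
def inK (u v : ℝ → ℝ) : Prop :=
  ContinuousOn u (Icc (0:ℝ) 1) ∧ ContinuousOn v (Icc (0:ℝ) 1) ∧
  (∀ t ∈ Icc (0:ℝ) 1, 0 ≤ u t) ∧ (∀ t ∈ Icc (0:ℝ) 1, 0 ≤ v t) ∧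
  S.ctilde 0 * supN u ≤ minOnIcc u (S.a 0) (S.b 0) ∧
  S.ctilde 1 * supN v ≤ minOnIcc v (S.a 1) (S.b 1)

/-- `𝒦_{ij}(s) = ∫₀¹ kᵢ(t,s) dB_{ij}(t)`. -/
def KK (i j : Fin 2) (s : ℝ) : ℝ := ∫ t, S.k i t s ∂(S.B i j)

/-- `Qᵢ = Σ_l β_{i1}[γ_{il}] l_{il2} δ_{il}[1]`. -/
def Q (i : Fin 2) : ℝ := ∑ l, S.β i 0 (S.γ i l) * S.l2 i l * S.δ i l (fun _ => 1)

/-- `Sᵢ = Σ_l β_{i2}[γ_{il}] l_{il2} δ_{il}[1]`. -/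
def Sq (i : Fin 2) : ℝ := ∑ l, S.β i 1 (S.γ i l) * S.l2 i l * S.δ i l (fun _ => 1)

/-- The determinant `Dᵢ`. -/
def D (i : Fin 2) : ℝ :=
  (1 - S.h2 i 0 * S.β i 0 (S.γ i 0)) * (1 - S.h2 i 1 * S.β i 1 (S.γ i 1))
    - S.h2 i 0 * S.h2 i 1 * S.β i 0 (S.γ i 1) * S.β i 1 (S.γ i 0)

/-- The determinant `𝐷̲ᵢ` (with the lower constants `h_{ij1}`). -/
def Dl (i : Fin 2) : ℝ :=
  (1 - S.h1 i 0 * S.β i 0 (S.γ i 0)) * (1 - S.h1 i 1 * S.β i 1 (S.γ i 1))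
    - S.h1 i 0 * S.h1 i 1 * S.β i 0 (S.γ i 1) * S.β i 1 (S.γ i 0)

def θ1 (i : Fin 2) : ℝ := (1 - S.h2 i 1 * S.β i 1 (S.γ i 1)) / S.D i
def θ2 (i : Fin 2) : ℝ := S.h2 i 1 * S.β i 0 (S.γ i 1) / S.D i
def θ3 (i : Fin 2) : ℝ := S.h2 i 0 * S.β i 1 (S.γ i 0) / S.D i
def θ4 (i : Fin 2) : ℝ := (1 - S.h2 i 0 * S.β i 0 (S.γ i 0)) / S.D i

/-- `1/mᵢ = sup_{t ∈ [0,1]} ∫₀¹ kᵢ(t,s)gᵢ(s) ds`. -/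
def mInv (i : Fin 2) : ℝ :=
  sSup ((fun t => ∫ s in Icc (0:ℝ) 1, S.k i t s * S.g i s) '' Icc (0:ℝ) 1)

/-- `1/Mᵢ = inf_{t ∈ [aᵢ,bᵢ]} ∫_{aᵢ}^{bᵢ} kᵢ(t,s)gᵢ(s) ds`. -/
def MInv (i : Fin 2) : ℝ :=
  sInf ((fun t => ∫ s in Icc (S.a i) (S.b i), S.k i t s * S.g i s) '' Icc (S.a i) (S.b i))

/-- `fᵢ^{0,ρ} = sup{fᵢ(t,u,v)/ρ : t ∈ [0,1], u,v ∈ [0,ρ]}`. -/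
def fSup (i : Fin 2) (ρ : ℝ) : ℝ :=
  sSup {x | ∃ t ∈ Icc (0:ℝ) 1, ∃ u ∈ Icc (0:ℝ) ρ, ∃ v ∈ Icc (0:ℝ) ρ, x = S.f i t u v / ρ}

/-- `f_{1,(ρ,ρ/c)}`. -/
def fInf1 (ρ : ℝ) : ℝ :=
  sInf {x | ∃ t ∈ Icc (S.a 0) (S.b 0), ∃ u ∈ Icc ρ (ρ / S.cc), ∃ v ∈ Icc (0:ℝ) (ρ / S.cc),
    x = S.f 0 t u v / ρ}

/-- `f_{2,(ρ,ρ/c)}`. -/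
def fInf2 (ρ : ℝ) : ℝ :=
  sInf {x | ∃ t ∈ Icc (S.a 1) (S.b 1), ∃ u ∈ Icc (0:ℝ) (ρ / S.cc), ∃ v ∈ Icc ρ (ρ / S.cc),
    x = S.f 1 t u v / ρ}

def fInf (i : Fin 2) (ρ : ℝ) : ℝ := if i = 0 then S.fInf1 ρ else S.fInf2 ρ

/-- `f*_{i,(0,ρ/c)}`. -/
def fInfStar (i : Fin 2) (ρ : ℝ) : ℝ :=
  sInf {x | ∃ t ∈ Icc (S.a i) (S.b i), ∃ u ∈ Icc (0:ℝ) (ρ / S.cc),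
    ∃ v ∈ Icc (0:ℝ) (ρ / S.cc), x = S.f i t u v / ρ}

/-- Condition `(I¹_ρ)`. -/
def CondI1 (ρ : ℝ) : Prop := ∀ i : Fin 2,
  S.fSup i ρ *
      ((supN (S.γ i 0) * S.h2 i 0 * S.θ1 i + supN (S.γ i 1) * S.h2 i 1 * S.θ3 i)
          * (∫ s in Icc (0:ℝ) 1, S.KK i 0 s * S.g i s)
        + (supN (S.γ i 0) * S.h2 i 0 * S.θ2 i + supN (S.γ i 1) * S.h2 i 1 * S.θ4 i)
          * (∫ s in Icc (0:ℝ) 1, S.KK i 1 s * S.g i s)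
        + S.mInv i)
    + supN (S.γ i 0) * S.h2 i 0 * (S.θ1 i * S.Q i + S.θ2 i * S.Sq i)
    + supN (S.γ i 1) * S.h2 i 1 * (S.θ3 i * S.Q i + S.θ4 i * S.Sq i)
    + (∑ j, supN (S.γ i j) * S.l2 i j * S.δ i j fun _ => 1) < 1

/-- The bracket appearing in conditions `(I⁰_ρ)` and `(I⁰_ρ)*`. -/
def Ψ (i : Fin 2) : ℝ :=
  (S.cγ i 0 * supN (S.γ i 0) * S.h1 i 0 / S.Dl i * (1 - S.h1 i 1 * S.β i 1 (S.γ i 1))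
      + S.cγ i 1 * supN (S.γ i 1) * S.h1 i 1 / S.Dl i * (S.h1 i 0 * S.β i 1 (S.γ i 0)))
    * (∫ s in Icc (S.a i) (S.b i), S.KK i 0 s * S.g i s)
  + (S.cγ i 0 * supN (S.γ i 0) * S.h1 i 0 / S.Dl i * (S.h1 i 1 * S.β i 0 (S.γ i 1))
      + S.cγ i 1 * supN (S.γ i 1) * S.h1 i 1 / S.Dl i * (1 - S.h1 i 0 * S.β i 0 (S.γ i 0)))
    * (∫ s in Icc (S.a i) (S.b i), S.KK i 1 s * S.g i s)
  + S.MInv i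

/-- Condition `(I⁰_ρ)`. -/
def CondI0 (ρ : ℝ) : Prop := ∀ i : Fin 2, 1 < S.fInf i ρ * S.Ψ i

/-- Condition `(I⁰_ρ)*`. -/
def CondI0Star (ρ : ℝ) : Prop := ∃ i : Fin 2, 1 < S.fInfStar i ρ * S.Ψ i

/-- `(u,v)` is a fixed point of `T` (as functions on `[0,1]`). -/
def IsFixedPt (u v : ℝ → ℝ) : Prop :=
  ∀ t ∈ Icc (0:ℝ) 1, S.T1 u v t = u t ∧ S.T2 u v t = v t

/-- `(u,v)` is a positive solution: a fixed point of `T` in `K` with `‖(u,v)‖ > 0`. -/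
def PosSol (u v : ℝ → ℝ) : Prop :=
  S.inK u v ∧ S.IsFixedPt u v ∧ 0 < max (supN u) (supN v)

/-- Two pairs are distinct as elements of `C[0,1] × C[0,1]`. -/
def Distinct (u₁ v₁ u₂ v₂ : ℝ → ℝ) : Prop :=
  ∃ t ∈ Icc (0:ℝ) 1, u₁ t ≠ u₂ t ∨ v₁ t ≠ v₂ t

end Setup

/-!
On a bounded part of `K` all functions take values in some `[0, r]`, so `fᵢ(s, u(s), v(s)) ≤ C`
for a.e. `s` and the integrands of `Fᵢ` are dominated by `C Φᵢ gᵢ ∈ L¹`.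

Continuity: the boundary terms converge since `β`, `δ` integrate against finite measures and `H`,
`L` are continuous; the integral terms converge uniformly in `t` by dominated convergence, because
`|Fᵢ(u,v)(t) - Fᵢ(u',v')(t)| ≤ ∫ Φᵢ gᵢ |fᵢ(·, u, v) - fᵢ(·, u', v')|`.

Compactness: Arzelà–Ascoli. The coefficients of `γ_{i1}`, `γ_{i2}` in `Tᵢ` are bounded,
`|Fᵢ(u,v)| ≤ C ∫ gᵢ Φᵢ`, and equicontinuity follows from the continuity of `γ_{ij}` and from
`|Fᵢ(u,v)(t) - Fᵢ(u,v)(τ)| ≤ C ∫ |kᵢ(t,s) - kᵢ(τ,s)| gᵢ(s) ds → 0` as `t → τ`, again by dominated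
convergence.
-/

open Topology

local notation "𝕀" => Icc (0:ℝ) 1

theorem abs_le_supN {w : ℝ → ℝ} (hw : ContinuousOn w 𝕀) {t : ℝ} (ht : t ∈ 𝕀) :
    |w t| ≤ supN w :=
  le_csSup (isCompact_Icc.image_of_continuousOn hw.abs).bddAbove ⟨t, ht, rfl⟩

theorem supN_nonneg (w : ℝ → ℝ) : 0 ≤ supN w :=
  Real.sSup_nonneg (by rintro _ ⟨t, -, rfl⟩; exact abs_nonneg _)

theorem supN_le {w : ℝ → ℝ} {C : ℝ} (h : ∀ t ∈ 𝕀, |w t| ≤ C) : supN w ≤ C :=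
  Real.sSup_le (by rintro _ ⟨t, ht, rfl⟩; exact h t ht)
    ((abs_nonneg _).trans (h 0 (left_mem_Icc.2 zero_le_one)))

theorem supN_le_supN_add_supN_sub {w w' : ℝ → ℝ} (hw : ContinuousOn w 𝕀)
    (hw' : ContinuousOn w' 𝕀) : supN w' ≤ supN w + supN (fun t => w t - w' t) :=
  supN_le fun t ht => by
    have h : |w t - w' t| ≤ supN fun t => w t - w' t := abs_le_supN (hw.sub hw') ht
    linarith [abs_sub_abs_le_abs_sub (w' t) (w t), abs_sub_comm (w' t) (w t), abs_le_supN hw ht]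

theorem abs_mul_le_supN_mul {w : ℝ → ℝ} (hw : ContinuousOn w 𝕀) {t : ℝ} (ht : t ∈ 𝕀) (a : ℝ) :
    |w t * a| ≤ supN w * |a| := by
  rw [abs_mul]
  exact mul_le_mul_of_nonneg_right (abs_le_supN hw ht) (abs_nonneg a)

theorem tendsto_apply_of_tendsto_supN_sub {α : Type*} {l : Filter α} {w : ℝ → ℝ}
    {W : α → ℝ → ℝ} (hw : ContinuousOn w 𝕀) (hW : ∀ᶠ x in l, ContinuousOn (W x) 𝕀)
    (h : Tendsto (fun x => supN fun t => w t - W x t) l (𝓝 0)) {t : ℝ} (ht : t ∈ 𝕀) :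
    Tendsto (fun x => W x t) l (𝓝 (w t)) := by
  rw [tendsto_iff_dist_tendsto_zero]
  refine squeeze_zero' (Eventually.of_forall fun _ => dist_nonneg) ?_ h
  filter_upwards [hW] with x hWx
  rw [Real.dist_eq, abs_sub_comm]
  exact abs_le_supN (hw.sub hWx) ht

def nonnegBall (r : ℝ) : Set (ℝ → ℝ) := {w | ContinuousOn w 𝕀 ∧ ∀ t ∈ 𝕀, w t ∈ Icc 0 r}

theorem aemeasurable_comp_of_caratheodory {E : Type*} [TopologicalSpace E] {μ : Measure ℝ}
    {G : ℝ → E → ℝ} {D : Set E} (hG_meas : ∀ e, Measurable fun t => G t e)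
    (hG_cont : ∀ᵐ t ∂μ, ContinuousOn (G t) D) (hμ : ∀ᵐ t ∂μ, t ∈ 𝕀)
    {w : ℝ → E} (hw : ContinuousOn w 𝕀) (hwD : MapsTo w 𝕀 D) :
    AEMeasurable (fun t => G t (w t)) μ := by
  -- `G t (w t)` is the pointwise limit of `G t (w (a n t))`, where `a n t` takes countably
  -- many values
  set a : ℕ → ℝ → ℝ := fun n t => (⌊t * n⌋₊ : ℝ) / n
  have ha_mem : ∀ n, ∀ t ∈ 𝕀, a n t ∈ 𝕀 := fun n t ht =>
    ⟨div_nonneg (Nat.cast_nonneg _) n.cast_nonneg, (div_le_of_le_mul₀ n.cast_nonneg ht.1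
      (Nat.floor_le (mul_nonneg ht.1 n.cast_nonneg))).trans ht.2⟩
  refine aemeasurable_of_tendsto_metrizable_ae atTop (f := fun n t => G t (w (a n t)))
    (fun n => ?_) ?_
  · have hmeas : Measurable fun p : ℝ × ℕ => G p.1 (w (p.2 / n)) :=
      measurable_from_prod_countable_left fun k => hG_meas (w ((k : ℝ) / n))
    exact (hmeas.comp (measurable_id.prodMk
      (Nat.measurable_floor.comp (measurable_id.mul_const _)))).aemeasurable
  · filter_upwards [hG_cont, hμ] with t hGt ht
    have ha : Tendsto (fun n => a n t) atTop (𝓝[𝕀] t) :=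
      tendsto_nhdsWithin_iff.2 ⟨(tendsto_nat_floor_mul_div_atTop ht.1).comp
        tendsto_natCast_atTop_atTop, Eventually.of_forall fun n => ha_mem n t ht⟩
    exact ((hGt (w t) (hwD ht)).comp (hw t ht) hwD).tendsto.comp ha

section SupportedMeasure

variable {ν : Measure ℝ} [IsFiniteMeasure ν]

theorem integrable_of_continuousOn_of_ae_mem (hν : ∀ᵐ s ∂ν, s ∈ 𝕀) {w : ℝ → ℝ}
    (hw : ContinuousOn w 𝕀) : Integrable w ν := by
  rw [← Measure.restrict_eq_self_of_ae_mem hν]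
  exact hw.integrableOn_compact isCompact_Icc

theorem abs_integral_le_supN_mul (hν : ∀ᵐ s ∂ν, s ∈ 𝕀) {w : ℝ → ℝ} (hw : ContinuousOn w 𝕀) :
    |∫ s, w s ∂ν| ≤ supN w * ν.real univ :=
  norm_integral_le_of_norm_le_const (f := w)
    (by filter_upwards [hν] with s hs using abs_le_supN hw hs)

theorem integral_mem_Icc_of_mem_nonnegBall (hν : ∀ᵐ s ∂ν, s ∈ 𝕀) {w : ℝ → ℝ} {r : ℝ}
    (hw : w ∈ nonnegBall r) : ∫ s, w s ∂ν ∈ Icc 0 (r * ν.real univ) := by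
  have hw_ae : ∀ᵐ s ∂ν, w s ∈ Icc 0 r := by filter_upwards [hν] with s hs using hw.2 s hs
  refine ⟨integral_nonneg_of_ae (hw_ae.mono fun s hs => hs.1), ?_⟩
  refine (le_abs_self _).trans (norm_integral_le_of_norm_le_const (f := w) ?_)
  filter_upwards [hw_ae] with s hs
  exact abs_le.2 ⟨by linarith [hs.1, hs.2], hs.2⟩

theorem tendsto_integral_of_tendsto_supN_sub (hν : ∀ᵐ s ∂ν, s ∈ 𝕀) {α : Type*} {l : Filter α}
    {w : ℝ → ℝ} {W : α → ℝ → ℝ} (hw : ContinuousOn w 𝕀) (hW : ∀ᶠ x in l, ContinuousOn (W x) 𝕀)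
    (h : Tendsto (fun x => supN fun t => w t - W x t) l (𝓝 0)) :
    Tendsto (fun x => ∫ s, W x s ∂ν) l (𝓝 (∫ s, w s ∂ν)) := by
  rw [tendsto_iff_dist_tendsto_zero]
  refine squeeze_zero' (Eventually.of_forall fun _ => dist_nonneg) ?_
    (by simpa using h.mul_const (ν.real univ))
  filter_upwards [hW] with x hWx
  rw [Real.dist_eq, abs_sub_comm, ← integral_sub (integrable_of_continuousOn_of_ae_mem hν hw)
    (integrable_of_continuousOn_of_ae_mem hν hWx)]
  exact abs_integral_le_supN_mul hν (hw.sub hWx)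

theorem tendsto_comp_integral (hν : ∀ᵐ s ∂ν, s ∈ 𝕀) {G : ℝ → ℝ} (hG : ContinuousOn G (Ici 0))
    {α : Type*} {l : Filter α} {w : ℝ → ℝ} {W : α → ℝ → ℝ} {r : ℝ} (hw : w ∈ nonnegBall r)
    (hW : ∀ᶠ x in l, W x ∈ nonnegBall r)
    (h : Tendsto (fun x => supN fun t => w t - W x t) l (𝓝 0)) :
    Tendsto (fun x => G (∫ s, W x s ∂ν)) l (𝓝 (G (∫ s, w s ∂ν))) :=
  (hG _ (integral_mem_Icc_of_mem_nonnegBall hν hw).1).tendsto.comp <|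
    tendsto_nhdsWithin_iff.2 ⟨tendsto_integral_of_tendsto_supN_sub hν hw.1
      (hW.mono fun _ hx => hx.1) h,
      hW.mono fun _ hx => (integral_mem_Icc_of_mem_nonnegBall hν hx).1⟩

end SupportedMeasure

theorem ContinuousMap.isCompact_closure_of_abs_le_of_equicontinuous {X : Type*}
    [TopologicalSpace X] [CompactSpace X] {A : Set C(X, ℝ)} {M : ℝ}
    (hA : ∀ q ∈ A, ∀ x, |q x| ≤ M) (hA' : Equicontinuous ((↑) : A → X → ℝ)) :
    IsCompact (closure A) := by
  let e := (ContinuousMap.isometryEquivBoundedOfCompact X ℝ).toHomeomorph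
  have hrange : range ((↑) : e '' A → X → ℝ) = range ((↑) : A → X → ℝ) := by
    ext f
    simp only [mem_range, Subtype.exists, mem_image]
    constructor
    · rintro ⟨_, ⟨q, hq, rfl⟩, rfl⟩; exact ⟨q, hq, rfl⟩
    · rintro ⟨q, hq, rfl⟩; exact ⟨e q, ⟨q, hq, rfl⟩, rfl⟩
  have hcompact : IsCompact (closure (e '' A)) :=
    BoundedContinuousFunction.arzela_ascoli (Icc (-M) M) isCompact_Icc _
      (by rintro _ x ⟨q, hq, rfl⟩; exact abs_le.1 (hA q hq x))
      (equicontinuous_iff_range.2 (hrange ▸ equicontinuous_iff_range.1 hA'))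
  rw [← e.image_closure] at hcompact
  exact e.isCompact_image.1 hcompact

theorem forall_exists_pos_of_tendsto_comap {α : Type*} {d E : α → ℝ} {s : Set α}
    (hd : ∀ a, 0 ≤ d a) (h : Tendsto E (comap d (𝓝 0) ⊓ 𝓟 s) (𝓝 0)) :
    ∀ ε > 0, ∃ δ > 0, ∀ a ∈ s, d a < δ → E a < ε := by
  intro ε hε
  obtain ⟨δ, hδ, hball⟩ := Metric.eventually_nhds_iff.1 <| eventually_comap.1 <|
    eventually_inf_principal.1 (h.eventually (gt_mem_nhds hε))
  refine ⟨δ, hδ, fun a ha hda => hball ?_ a rfl ha⟩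
  rwa [Real.dist_eq, sub_zero, abs_of_nonneg (hd a)]

namespace Setup

variable (S : Setup) {α : Type*} {l : Filter α} {r C : ℝ} {u v u' v' w : ℝ → ℝ}
  {U V W : α → ℝ → ℝ}

theorem mem_nonnegBall_of_inK (hK : S.inK u v) (hr : max (supN u) (supN v) ≤ r) :
    u ∈ nonnegBall r ∧ v ∈ nonnegBall r := by
  obtain ⟨hu, hv, hu0, hv0, -, -⟩ := hK
  exact ⟨⟨hu, fun t ht => ⟨hu0 t ht, (le_abs_self _).trans
      ((abs_le_supN hu ht).trans ((le_max_left _ _).trans hr))⟩⟩,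
    ⟨hv, fun t ht => ⟨hv0 t ht, (le_abs_self _).trans
      ((abs_le_supN hv ht).trans ((le_max_right _ _).trans hr))⟩⟩⟩

def FBoundedBy (i : Fin 2) (r C : ℝ) : Prop :=
  ∀ᵐ t ∂volume.restrict 𝕀, ∀ x ∈ Icc 0 r, ∀ y ∈ Icc 0 r, S.f i t x y ≤ C

theorem exists_fBoundedBy (i : Fin 2) (r : ℝ) : ∃ C, S.FBoundedBy i r C := by
  obtain ⟨φ, hφ, hf⟩ := S.f_bdd i (max r 1) (by positivity)
  have hφ_fin : eLpNormEssSup φ (volume.restrict 𝕀) ≠ ⊤ := by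
    simpa [eLpNorm_exponent_top] using hφ.2.ne
  refine ⟨(eLpNormEssSup φ (volume.restrict 𝕀)).toReal, ?_⟩
  filter_upwards [hf, ae_le_eLpNormEssSup (f := φ)] with t hft hφt x hx y hy
  calc S.f i t x y ≤ φ t := hft x ⟨hx.1, hx.2.trans (le_max_left r 1)⟩ y
          ⟨hy.1, hy.2.trans (le_max_left r 1)⟩
    _ ≤ ‖φ t‖ := le_abs_self _
    _ ≤ _ := by rw [← toReal_enorm]; exact ENNReal.toReal_mono hφ_fin hφt

section Kernel

variable (i : Fin 2) {t τ : ℝ}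

theorem ae_kernel_bounds (ht : t ∈ 𝕀) : ∀ᵐ s ∂volume.restrict 𝕀,
    0 ≤ S.g i s ∧ 0 ≤ S.k i t s ∧ S.k i t s ≤ S.Φ i s := by
  filter_upwards [S.g_nonneg i, S.k_le i t ht, ae_restrict_mem measurableSet_Icc]
    with s hg hk hs using ⟨hg, S.k_nonneg i t ht s hs, hk⟩

theorem ae_Φ_nonneg : ∀ᵐ s ∂volume.restrict 𝕀, 0 ≤ S.Φ i s :=
  (S.ae_kernel_bounds i (left_mem_Icc.2 zero_le_one)).mono fun _ h => h.2.1.trans h.2.2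

theorem ae_norm_abs_kernel_sub_mul_g_le (ht : t ∈ 𝕀) (hτ : τ ∈ 𝕀) :
    ∀ᵐ s ∂volume.restrict 𝕀, ‖|S.k i t s - S.k i τ s| * S.g i s‖ ≤ S.g i s * S.Φ i s := by
  filter_upwards [S.ae_kernel_bounds i ht, S.ae_kernel_bounds i hτ]
    with s ⟨hg, hk0, hkΦ⟩ ⟨_, hk0', hkΦ'⟩
  rw [Real.norm_eq_abs, abs_of_nonneg (by positivity), mul_comm]
  exact mul_le_mul_of_nonneg_left (abs_sub_le_of_nonneg_of_le hk0 hkΦ hk0' hkΦ') hg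

theorem integrable_abs_kernel_sub_mul_g (ht : t ∈ 𝕀) (hτ : τ ∈ 𝕀) :
    Integrable (fun s => |S.k i t s - S.k i τ s| * S.g i s) (volume.restrict 𝕀) :=
  (S.gΦ_int i).mono'
    (((S.k_meas i).of_uncurry_left.sub (S.k_meas i).of_uncurry_left).aestronglyMeasurable.norm.mul
      (S.g_meas i).aestronglyMeasurable)
    (S.ae_norm_abs_kernel_sub_mul_g_le i ht hτ)

theorem tendsto_integral_abs_kernel_sub_mul_g (hτ : τ ∈ 𝕀) :
    Tendsto (fun t => ∫ s in 𝕀, |S.k i t s - S.k i τ s| * S.g i s) (𝓝[𝕀] τ) (𝓝 0) := by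
  have h := tendsto_integral_filter_of_dominated_convergence (l := 𝓝[𝕀] τ) (f := fun _ => 0)
    (F := fun t s => |S.k i t s - S.k i τ s| * S.g i s) (fun s => S.g i s * S.Φ i s)
    (eventually_mem_nhdsWithin.mono fun t ht =>
      (S.integrable_abs_kernel_sub_mul_g i ht hτ).aestronglyMeasurable)
    (eventually_mem_nhdsWithin.mono fun t ht => S.ae_norm_abs_kernel_sub_mul_g_le i ht hτ)
    (S.gΦ_int i) ?_
  · simpa using h
  filter_upwards [S.k_cont i τ hτ] with s hks
  simpa using (hks.mono_left nhdsWithin_le_nhds).mul_const (S.g i s)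

end Kernel

section Nonlinearity

variable {i : Fin 2} {t τ : ℝ}

theorem ae_f_comp_mem_Icc (hC : S.FBoundedBy i r C) (hu : u ∈ nonnegBall r)
    (hv : v ∈ nonnegBall r) :
    ∀ᵐ s ∂volume.restrict 𝕀, S.f i s (u s) (v s) ∈ Icc 0 C := by
  filter_upwards [hC, ae_restrict_mem measurableSet_Icc] with s hCs hs
  exact ⟨S.f_nonneg i s hs _ (hu.2 s hs).1 _ (hv.2 s hs).1, hCs _ (hu.2 s hs) _ (hv.2 s hs)⟩

theorem aestronglyMeasurable_f_comp (hu : u ∈ nonnegBall r) (hv : v ∈ nonnegBall r) :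
    AEStronglyMeasurable (fun s => S.f i s (u s) (v s)) (volume.restrict 𝕀) :=
  (aemeasurable_comp_of_caratheodory (G := fun t p => S.f i t p.1 p.2) (D := Ici 0 ×ˢ Ici 0)
    (fun p => S.f_meas i p.1 p.2) (S.f_cont i) (ae_restrict_mem measurableSet_Icc)
    (hu.1.prodMk hv.1) fun t ht => ⟨(hu.2 t ht).1, (hv.2 t ht).1⟩).aestronglyMeasurable

theorem ae_abs_kernel_mul_f_le (hC : S.FBoundedBy i r C) (ht : t ∈ 𝕀)
    (hu : u ∈ nonnegBall r) (hv : v ∈ nonnegBall r) : ∀ᵐ s ∂volume.restrict 𝕀,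
    ‖S.k i t s * S.g i s * S.f i s (u s) (v s)‖ ≤ C * (S.g i s * S.Φ i s) := by
  filter_upwards [S.ae_kernel_bounds i ht, S.ae_f_comp_mem_Icc hC hu hv]
    with s ⟨hg, hk0, hkΦ⟩ ⟨hf0, hfC⟩
  have hΦ : 0 ≤ S.Φ i s := hk0.trans hkΦ
  rw [Real.norm_eq_abs, abs_of_nonneg (by positivity)]
  calc S.k i t s * S.g i s * S.f i s (u s) (v s) ≤ S.Φ i s * S.g i s * C := by gcongr
    _ = C * (S.g i s * S.Φ i s) := by ring

theorem integrable_kernel_mul_f (hC : S.FBoundedBy i r C) (ht : t ∈ 𝕀)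
    (hu : u ∈ nonnegBall r) (hv : v ∈ nonnegBall r) :
    Integrable (fun s => S.k i t s * S.g i s * S.f i s (u s) (v s)) (volume.restrict 𝕀) :=
  ((S.gΦ_int i).const_mul C).mono'
    ((((S.k_meas i).of_uncurry_left.mul (S.g_meas i)).aestronglyMeasurable).mul
      (S.aestronglyMeasurable_f_comp hu hv))
    (S.ae_abs_kernel_mul_f_le hC ht hu hv)

theorem abs_F_le (hC : S.FBoundedBy i r C) (ht : t ∈ 𝕀)
    (hu : u ∈ nonnegBall r) (hv : v ∈ nonnegBall r) :
    |S.F i u v t| ≤ C * ∫ s in 𝕀, S.g i s * S.Φ i s := by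
  rw [← integral_const_mul]
  exact norm_integral_le_of_norm_le ((S.gΦ_int i).const_mul C)
    (S.ae_abs_kernel_mul_f_le hC ht hu hv)

theorem ae_norm_Φ_mul_g_mul_abs_f_sub_le (hC : S.FBoundedBy i r C)
    (hu : u ∈ nonnegBall r) (hv : v ∈ nonnegBall r)
    (hu' : u' ∈ nonnegBall r) (hv' : v' ∈ nonnegBall r) : ∀ᵐ s ∂volume.restrict 𝕀,
    ‖S.Φ i s * S.g i s * |S.f i s (u s) (v s) - S.f i s (u' s) (v' s)|‖ ≤
      C * (S.g i s * S.Φ i s) := by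
  filter_upwards [S.g_nonneg i, S.ae_Φ_nonneg i, S.ae_f_comp_mem_Icc hC hu hv,
    S.ae_f_comp_mem_Icc hC hu' hv'] with s hg hΦ ⟨hf0, hfC⟩ ⟨hf0', hfC'⟩
  rw [Real.norm_eq_abs, abs_of_nonneg (by positivity)]
  calc S.Φ i s * S.g i s * |S.f i s (u s) (v s) - S.f i s (u' s) (v' s)|
      ≤ S.Φ i s * S.g i s * C := by gcongr; exact abs_sub_le_of_nonneg_of_le hf0 hfC hf0' hfC'
    _ = C * (S.g i s * S.Φ i s) := by ring

theorem integrable_Φ_mul_g_mul_abs_f_sub (hC : S.FBoundedBy i r C)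
    (hu : u ∈ nonnegBall r) (hv : v ∈ nonnegBall r)
    (hu' : u' ∈ nonnegBall r) (hv' : v' ∈ nonnegBall r) :
    Integrable (fun s => S.Φ i s * S.g i s * |S.f i s (u s) (v s) - S.f i s (u' s) (v' s)|)
      (volume.restrict 𝕀) :=
  ((S.gΦ_int i).const_mul C).mono'
    (((S.Φ_mem i).1.mul (S.g_meas i).aestronglyMeasurable).mul
      ((S.aestronglyMeasurable_f_comp hu hv).sub (S.aestronglyMeasurable_f_comp hu' hv')).norm)
    (S.ae_norm_Φ_mul_g_mul_abs_f_sub_le hC hu hv hu' hv')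

theorem abs_F_sub_F_le (hC : S.FBoundedBy i r C) (ht : t ∈ 𝕀)
    (hu : u ∈ nonnegBall r) (hv : v ∈ nonnegBall r)
    (hu' : u' ∈ nonnegBall r) (hv' : v' ∈ nonnegBall r) :
    |S.F i u v t - S.F i u' v' t| ≤
      ∫ s in 𝕀, S.Φ i s * S.g i s * |S.f i s (u s) (v s) - S.f i s (u' s) (v' s)| := by
  rw [F, F, ← integral_sub (S.integrable_kernel_mul_f hC ht hu hv)
    (S.integrable_kernel_mul_f hC ht hu' hv'), ← Real.norm_eq_abs]
  refine norm_integral_le_of_norm_le (S.integrable_Φ_mul_g_mul_abs_f_sub hC hu hv hu' hv') ?_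
  filter_upwards [S.ae_kernel_bounds i ht] with s ⟨hg, hk0, hkΦ⟩
  rw [Real.norm_eq_abs, ← mul_sub, abs_mul, abs_of_nonneg (mul_nonneg hk0 hg)]
  gcongr

theorem tendsto_integral_Φ_mul_g_mul_abs_f_sub [l.IsCountablyGenerated]
    (hC : S.FBoundedBy i r C) (hu : u ∈ nonnegBall r) (hv : v ∈ nonnegBall r)
    (hU : ∀ᶠ x in l, U x ∈ nonnegBall r) (hV : ∀ᶠ x in l, V x ∈ nonnegBall r)
    (hUu : ∀ s ∈ 𝕀, Tendsto (fun x => U x s) l (𝓝 (u s)))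
    (hVv : ∀ s ∈ 𝕀, Tendsto (fun x => V x s) l (𝓝 (v s))) :
    Tendsto (fun x => ∫ s in 𝕀,
      S.Φ i s * S.g i s * |S.f i s (u s) (v s) - S.f i s (U x s) (V x s)|) l (𝓝 0) := by
  have h := tendsto_integral_filter_of_dominated_convergence (f := fun _ => 0)
    (F := fun x s => S.Φ i s * S.g i s * |S.f i s (u s) (v s) - S.f i s (U x s) (V x s)|)
    (fun s => C * (S.g i s * S.Φ i s))
    (hU.and hV |>.mono fun x hx =>
      (S.integrable_Φ_mul_g_mul_abs_f_sub hC hu hv hx.1 hx.2).aestronglyMeasurable)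
    (hU.and hV |>.mono fun x hx => S.ae_norm_Φ_mul_g_mul_abs_f_sub_le hC hu hv hx.1 hx.2)
    ((S.gΦ_int i).const_mul C) ?_
  · simpa using h
  filter_upwards [S.f_cont i, ae_restrict_mem measurableSet_Icc] with s hfs hs
  have hUV : Tendsto (fun x => (U x s, V x s)) l (𝓝[Ici 0 ×ˢ Ici 0] (u s, v s)) :=
    tendsto_nhdsWithin_iff.2 ⟨(hUu s hs).prodMk_nhds (hVv s hs),
      hU.and hV |>.mono fun x hx => ⟨(hx.1.2 s hs).1, (hx.2.2 s hs).1⟩⟩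
  have hf := (hfs (u s, v s) ⟨(hu.2 s hs).1, (hv.2 s hs).1⟩).tendsto.comp hUV
  simpa using ((tendsto_const_nhds (x := S.f i s (u s) (v s))).sub hf).abs.const_mul
    (S.Φ i s * S.g i s)

theorem abs_F_sub_F_at_le (hC : S.FBoundedBy i r C) (ht : t ∈ 𝕀) (hτ : τ ∈ 𝕀)
    (hu : u ∈ nonnegBall r) (hv : v ∈ nonnegBall r) :
    |S.F i u v t - S.F i u v τ| ≤ C * ∫ s in 𝕀, |S.k i t s - S.k i τ s| * S.g i s := by
  rw [F, F, ← integral_sub (S.integrable_kernel_mul_f hC ht hu hv)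
    (S.integrable_kernel_mul_f hC hτ hu hv), ← integral_const_mul, ← Real.norm_eq_abs]
  refine norm_integral_le_of_norm_le ((S.integrable_abs_kernel_sub_mul_g i ht hτ).const_mul C) ?_
  filter_upwards [S.ae_kernel_bounds i ht, S.ae_f_comp_mem_Icc hC hu hv] with s ⟨hg, _⟩ ⟨hf0, hfC⟩
  rw [Real.norm_eq_abs, ← sub_mul, ← sub_mul, abs_mul, abs_mul, abs_of_nonneg hg,
    abs_of_nonneg hf0, mul_comm C]
  exact mul_le_mul_of_nonneg_left hfC (by positivity)

end Nonlinearity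

section Affine

/-- Both components of `T` have the shape `γ_{i1} a + γ_{i2} b + F_i(u,v)`, with the boundary
terms as coefficients `a`, `b`. -/
def affineF (i : Fin 2) (a b : ℝ) (u v : ℝ → ℝ) (t : ℝ) : ℝ :=
  S.γ i 0 t * a + S.γ i 1 t * b + S.F i u v t

variable (i : Fin 2) {t τ : ℝ}

theorem abs_γ_mul_add_le (ht : t ∈ 𝕀) (a b c : ℝ) :
    |S.γ i 0 t * a + S.γ i 1 t * b + c| ≤ supN (S.γ i 0) * |a| + supN (S.γ i 1) * |b| + |c| :=
  (abs_add_le _ _).trans <| add_le_add_left ((abs_add_le _ _).trans <|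
    add_le_add (abs_mul_le_supN_mul (S.γ_cont i 0) ht a)
      (abs_mul_le_supN_mul (S.γ_cont i 1) ht b)) _

theorem abs_affineF_sub_le (ht : t ∈ 𝕀) (a b a' b' : ℝ) (u v u' v' : ℝ → ℝ) :
    |S.affineF i a b u v t - S.affineF i a' b' u' v' t| ≤
      supN (S.γ i 0) * |a - a'| + supN (S.γ i 1) * |b - b'| + |S.F i u v t - S.F i u' v' t| := by
  have h : S.affineF i a b u v t - S.affineF i a' b' u' v' t =
      S.γ i 0 t * (a - a') + S.γ i 1 t * (b - b') + (S.F i u v t - S.F i u' v' t) := by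
    unfold affineF; ring
  exact h ▸ S.abs_γ_mul_add_le i ht _ _ _

theorem abs_affineF_sub_affineF_at_le (a b : ℝ) (u v : ℝ → ℝ) :
    |S.affineF i a b u v t - S.affineF i a b u v τ| ≤ |S.γ i 0 t - S.γ i 0 τ| * |a| +
      |S.γ i 1 t - S.γ i 1 τ| * |b| + |S.F i u v t - S.F i u v τ| := by
  have h : S.affineF i a b u v t - S.affineF i a b u v τ =
      (S.γ i 0 t - S.γ i 0 τ) * a + (S.γ i 1 t - S.γ i 1 τ) * b + (S.F i u v t - S.F i u v τ) := by
    unfold affineF; ring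
  rw [h, ← abs_mul, ← abs_mul]
  exact (abs_add_le _ _).trans (add_le_add_left (abs_add_le _ _) _)

theorem tendsto_supN_affineF_sub [l.IsCountablyGenerated] {a b : α → ℝ} {a₀ b₀ : ℝ}
    (ha : Tendsto a l (𝓝 a₀)) (hb : Tendsto b l (𝓝 b₀))
    (hu : u ∈ nonnegBall r) (hv : v ∈ nonnegBall r)
    (hU : ∀ᶠ x in l, U x ∈ nonnegBall r) (hV : ∀ᶠ x in l, V x ∈ nonnegBall r)
    (hUu : Tendsto (fun x => supN fun t => u t - U x t) l (𝓝 0))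
    (hVv : Tendsto (fun x => supN fun t => v t - V x t) l (𝓝 0)) :
    Tendsto (fun x => supN fun t => S.affineF i a₀ b₀ u v t - S.affineF i (a x) (b x) (U x) (V x) t)
      l (𝓝 0) := by
  obtain ⟨C, hC⟩ := S.exists_fBoundedBy i r
  have hI := S.tendsto_integral_Φ_mul_g_mul_abs_f_sub hC hu hv hU hV
    (fun s hs => tendsto_apply_of_tendsto_supN_sub hu.1 (hU.mono fun _ h => h.1) hUu hs)
    (fun s hs => tendsto_apply_of_tendsto_supN_sub hv.1 (hV.mono fun _ h => h.1) hVv hs)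
  have hbound := ((((tendsto_const_nhds (x := a₀)).sub ha).abs.const_mul (supN (S.γ i 0))).add
    (((tendsto_const_nhds (x := b₀)).sub hb).abs.const_mul (supN (S.γ i 1)))).add hI
  rw [sub_self, sub_self, abs_zero, mul_zero, mul_zero, add_zero, zero_add] at hbound
  refine squeeze_zero' (Eventually.of_forall fun _ => supN_nonneg _) ?_ hbound
  filter_upwards [hU, hV] with x hUx hVx
  exact supN_le fun t ht => (S.abs_affineF_sub_le i ht _ _ _ _ _ _ _ _).trans
    (add_le_add le_rfl (S.abs_F_sub_F_le hC ht hu hv hUx hVx))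

theorem isCompact_closure_of_forall_eq_affineF (A B r : ℝ) {s : Set C(𝕀, ℝ)}
    (hs : ∀ q ∈ s, ∃ a b u v, |a| ≤ A ∧ |b| ≤ B ∧ u ∈ nonnegBall r ∧ v ∈ nonnegBall r ∧
      ∀ x : 𝕀, q x = S.affineF i a b u v x) :
    IsCompact (closure s) := by
  obtain ⟨C, hC⟩ := S.exists_fBoundedBy i r
  refine ContinuousMap.isCompact_closure_of_abs_le_of_equicontinuous
    (M := supN (S.γ i 0) * A + supN (S.γ i 1) * B + C * ∫ s in 𝕀, S.g i s * S.Φ i s)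
    (fun q hq x => ?_) fun x₀ => ?_
  · obtain ⟨a, b, u, v, ha, hb, hu, hv, hq⟩ := hs q hq
    rw [hq]
    exact (S.abs_γ_mul_add_le i x.2 a b _).trans (add_le_add (add_le_add
      (mul_le_mul_of_nonneg_left ha (supN_nonneg _))
      (mul_le_mul_of_nonneg_left hb (supN_nonneg _))) (S.abs_F_le hC x.2 hu hv))
  have hω : Tendsto (fun t => |S.γ i 0 t - S.γ i 0 x₀| * A + |S.γ i 1 t - S.γ i 1 x₀| * B +
      C * ∫ s in 𝕀, |S.k i t s - S.k i x₀ s| * S.g i s) (𝓝[𝕀] x₀) (𝓝 0) := by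
    simpa using (((S.γ_cont i 0 _ x₀.2).tendsto.sub_const (S.γ i 0 x₀)).abs.mul_const A).add
      (((S.γ_cont i 1 _ x₀.2).tendsto.sub_const (S.γ i 1 x₀)).abs.mul_const B) |>.add
      ((S.tendsto_integral_abs_kernel_sub_mul_g i x₀.2).const_mul C)
  rw [nhdsWithin_eq_map_subtype_coe x₀.2, tendsto_map'_iff] at hω
  rw [Metric.equicontinuousAt_iff_right]
  intro ε hε
  filter_upwards [hω.eventually (gt_mem_nhds hε)] with x hx
  rintro ⟨q, hq⟩
  obtain ⟨a, b, u, v, ha, hb, hu, hv, hqe⟩ := hs q hq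
  rw [Real.dist_eq, hqe, hqe, abs_sub_comm]
  exact ((S.abs_affineF_sub_affineF_at_le i a b u v).trans (add_le_add (add_le_add
    (mul_le_mul_of_nonneg_left ha (abs_nonneg _)) (mul_le_mul_of_nonneg_left hb (abs_nonneg _)))
    (S.abs_F_sub_F_at_le hC x.2 x₀.2 hu hv))).trans_lt hx

end Affine

theorem tendsto_H_β (i j : Fin 2) (hw : w ∈ nonnegBall r) (hW : ∀ᶠ x in l, W x ∈ nonnegBall r)
    (h : Tendsto (fun x => supN fun t => w t - W x t) l (𝓝 0)) :
    Tendsto (fun x => S.H i j (S.β i j (W x))) l (𝓝 (S.H i j (S.β i j w))) :=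
  have := S.B_fin i j
  tendsto_comp_integral (mem_ae_iff.2 (S.B_supp i j)) (S.H_cont i j) hw hW h

theorem tendsto_L_δ (i j : Fin 2) (hw : w ∈ nonnegBall r) (hW : ∀ᶠ x in l, W x ∈ nonnegBall r)
    (h : Tendsto (fun x => supN fun t => w t - W x t) l (𝓝 0)) :
    Tendsto (fun x => S.L i j (S.δ i j (W x))) l (𝓝 (S.L i j (S.δ i j w))) :=
  have := S.C_fin i j
  tendsto_comp_integral (mem_ae_iff.2 (S.C_supp i j)) (S.L_cont i j) hw hW h

theorem abs_H_β_add_L_δ_le (i j : Fin 2) (hu : u ∈ nonnegBall r) (hv : v ∈ nonnegBall r) :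
    |S.H i j (S.β i j u) + S.L i j (S.δ i j v)| ≤
      S.h2 i j * (r * (S.B i j).real univ) + S.l2 i j * (r * (S.C i j).real univ) := by
  have := S.B_fin i j
  have := S.C_fin i j
  have hβ : S.β i j u ∈ _ := integral_mem_Icc_of_mem_nonnegBall (mem_ae_iff.2 (S.B_supp i j)) hu
  have hδ : S.δ i j v ∈ _ := integral_mem_Icc_of_mem_nonnegBall (mem_ae_iff.2 (S.C_supp i j)) hv
  rw [abs_of_nonneg (add_nonneg (S.H_nonneg i j _ hβ.1) (S.L_nonneg i j _ hδ.1))]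
  exact add_le_add
    ((S.H_bound_upper i j _ hβ.1).trans (mul_le_mul_of_nonneg_left hβ.2 (S.h2_nonneg i j)))
    ((S.L_bound i j _ hδ.1).trans (mul_le_mul_of_nonneg_left hδ.2 (S.l2_nonneg i j)))

/-- `comap d (𝓝 0) ⊓ 𝓟 K` is the filter of sup-norm neighbourhoods of `(u, v)` within `K`; being
countably generated, it supports dominated convergence. -/
theorem tendsto_supN_T_sub (hK : S.inK u v) :
    Tendsto (fun p : (ℝ → ℝ) × (ℝ → ℝ) => max (supN fun t => S.T1 u v t - S.T1 p.1 p.2 t)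
        (supN fun t => S.T2 u v t - S.T2 p.1 p.2 t))
      (comap (fun p => max (supN fun t => u t - p.1 t) (supN fun t => v t - p.2 t)) (𝓝 0) ⊓
        𝓟 {p | S.inK p.1 p.2}) (𝓝 0) := by
  set d := fun p : (ℝ → ℝ) × (ℝ → ℝ) =>
    max (supN fun t => u t - p.1 t) (supN fun t => v t - p.2 t)
  set l := comap d (𝓝 0) ⊓ 𝓟 {p | S.inK p.1 p.2}
  set r := max (supN u) (supN v) + 1
  have hd : Tendsto d l (𝓝 0) := tendsto_comap.mono_left inf_le_left
  have hU := squeeze_zero (fun _ => supN_nonneg _) (fun _ => le_max_left _ _) hd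
  have hV := squeeze_zero (fun _ => supN_nonneg _) (fun _ => le_max_right _ _) hd
  obtain ⟨hu, hv⟩ := S.mem_nonnegBall_of_inK hK (le_add_of_nonneg_right zero_le_one)
  have hball : ∀ᶠ p in l, p.1 ∈ nonnegBall r ∧ p.2 ∈ nonnegBall r := by
    filter_upwards [hd.eventually (gt_mem_nhds one_pos),
      mem_inf_of_right (mem_principal_self _)] with p hp hK'
    refine S.mem_nonnegBall_of_inK hK' (max_le ?_ ?_)
    · linarith [supN_le_supN_add_supN_sub hK.1 hK'.1, le_max_left (supN u) (supN v),
        le_max_left (supN fun t => u t - p.1 t) (supN fun t => v t - p.2 t), (hp : d p < 1)]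
    · linarith [supN_le_supN_add_supN_sub hK.2.1 hK'.2.1, le_max_right (supN u) (supN v),
        le_max_right (supN fun t => u t - p.1 t) (supN fun t => v t - p.2 t), (hp : d p < 1)]
  have hU' := hball.mono fun _ h => h.1
  have hV' := hball.mono fun _ h => h.2
  rw [← max_self (0 : ℝ)]
  exact (S.tendsto_supN_affineF_sub 0
    ((S.tendsto_H_β 0 0 hu hU' hU).add (S.tendsto_L_δ 0 0 hv hV' hV))
    ((S.tendsto_H_β 0 1 hu hU' hU).add (S.tendsto_L_δ 0 1 hv hV' hV)) hu hv hU' hV' hU hV).max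
    (S.tendsto_supN_affineF_sub 1
      ((S.tendsto_L_δ 1 0 hu hU' hU).add (S.tendsto_H_β 1 0 hv hV' hV))
      ((S.tendsto_L_δ 1 1 hu hU' hU).add (S.tendsto_H_β 1 1 hv hV' hV)) hu hv hU' hV' hU hV)

end Setup

/-- The operator `T : K → K` is compact: it is continuous on `K` (with respect to the
sup-norm distance) and maps bounded subsets of `K` to relatively compact subsets of
`C([0,1]) × C([0,1])`. -/
theorem T_is_compact (S : Setup) :
    (∀ u v : ℝ → ℝ, S.inK u v → ∀ ε > (0:ℝ), ∃ δ > (0:ℝ), ∀ u' v' : ℝ → ℝ, S.inK u' v' →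
      max (supN fun t => u t - u' t) (supN fun t => v t - v' t) < δ →
      max (supN fun t => S.T1 u v t - S.T1 u' v' t)
          (supN fun t => S.T2 u v t - S.T2 u' v' t) < ε) ∧
    (∀ r : ℝ, IsCompact (closure
      {p : C(Icc (0:ℝ) 1, ℝ) × C(Icc (0:ℝ) 1, ℝ) | ∃ u v : ℝ → ℝ, S.inK u v ∧
        max (supN u) (supN v) ≤ r ∧
        ∀ t : Icc (0:ℝ) 1, p.1 t = S.T1 u v t ∧ p.2 t = S.T2 u v t})) := by
  refine ⟨fun u v hK ε hε => ?_, fun r => ?_⟩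
  · obtain ⟨δ, hδ, h⟩ := forall_exists_pos_of_tendsto_comap
      (fun _ => (supN_nonneg _).trans (le_max_left _ _)) (S.tendsto_supN_T_sub hK) ε hε
    exact ⟨δ, hδ, fun u' v' hK' => h (u', v') hK'⟩
  refine IsCompact.of_isClosed_subset ?_ isClosed_closure
    (closure_mono subset_fst_image_prod_snd_image)
  rw [closure_prod_eq]
  exact (S.isCompact_closure_of_forall_eq_affineF 0 _ _ r (by
      rintro _ ⟨p, ⟨u, v, hK, hr, hp⟩, rfl⟩
      obtain ⟨hu, hv⟩ := S.mem_nonnegBall_of_inK hK hr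
      exact ⟨_, _, u, v, S.abs_H_β_add_L_δ_le 0 0 hu hv, S.abs_H_β_add_L_δ_le 0 1 hu hv, hu, hv,
        fun x => (hp x).1⟩)).prod
    (S.isCompact_closure_of_forall_eq_affineF 1 _ _ r (by
      rintro _ ⟨p, ⟨u, v, hK, hr, hp⟩, rfl⟩
      obtain ⟨hu, hv⟩ := S.mem_nonnegBall_of_inK hK hr
      exact ⟨_, _, u, v, add_comm (S.L 1 0 _) _ ▸ S.abs_H_β_add_L_δ_le 1 0 hv hu,
        add_comm (S.L 1 1 _) _ ▸ S.abs_H_β_add_L_δ_le 1 1 hv hu, hu, hv, fun x => (hp x).2⟩))
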